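/- General conditions for stationarity: let G be a finite simple graph in which every vertex has positive degree, M a set of marked vertices, and ψ : Dart(G) → ℂ a state satisfying: (1) there is a constant a such that ψ(e) = a for every dart e with unmarked source e.fst ∉ M; (2) for every marked vertex v ∈ M, the sum of the amplitudes of darts with source v is zero: Σ_{e : e.fst = v} ψ(e) = 0; (3) ψ(e) = ψ(e.symm) for every dart e. Then ψ is fixed by one step of the search algorithm: (S∘C∘Q)ψ = ψ. -/

import Mathlib

namespace GraphWalk

variable {V : Type*}

/-- The flip-flop shift operator `S` on the darts of a simple graph:
`(Sψ)(e) = ψ(e.symm)`. -/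
noncomputable def shift (G : SimpleGraph V) (ψ : G.Dart → ℂ) : G.Dart → ℂ :=
  fun e => ψ e.symm

/-- The Grover coin `C`:
`(Cψ)(e) = (2/deg(e.fst)) Σ_{e' : e'.fst = e.fst} ψ(e') − ψ(e)`. -/
noncomputable def coin [Fintype V] [DecidableEq V] (G : SimpleGraph V)
    [DecidableRel G.Adj] (ψ : G.Dart → ℂ) : G.Dart → ℂ :=
  fun e => (2 / (G.degree e.fst : ℂ)) *
      (∑ e' ∈ Finset.univ.filter (fun e' : G.Dart => e'.fst = e.fst), ψ e') - ψ e

/-- The query `Q`, flipping the sign of all amplitudes at marked vertices. -/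
noncomputable def query [DecidableEq V] (G : SimpleGraph V) (M : Finset V)
    (ψ : G.Dart → ℂ) : G.Dart → ℂ :=
  fun e => if e.fst ∈ M then -ψ e else ψ e

/-- One step of the search algorithm, `U' = S ∘ C ∘ Q`. -/
noncomputable def step [Fintype V] [DecidableEq V] (G : SimpleGraph V)
    [DecidableRel G.Adj] (M : Finset V) (ψ : G.Dart → ℂ) : G.Dart → ℂ :=
  shift G (coin G (query G M ψ))

/-- One step of the quantum walk without query, `U = S ∘ C`. -/
noncomputable def walk [Fintype V] [DecidableEq V] (G : SimpleGraph V)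
    [DecidableRel G.Adj] (ψ : G.Dart → ℂ) : G.Dart → ℂ :=
  shift G (coin G ψ)

end GraphWalk

/-!
At a marked vertex the amplitudes of the outgoing darts sum to zero, so the Grover coin acts
there as `-1` and undoes the sign flip of the query. At an unmarked vertex the state is the
constant `a` on all outgoing darts, and the coin `2 · mean - value` fixes it. Hence `C Q ψ = ψ`,
and the symmetry `ψ e = ψ e.symm` makes `ψ` invariant under the shift.
-/

theorem SimpleGraph.Dart.degree_fst_pos {V : Type*} [Fintype V] {G : SimpleGraph V}
    [DecidableRel G.Adj] (e : G.Dart) : 0 < G.degree e.fst :=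
  (G.degree_pos_iff_exists_adj e.fst).2 ⟨e.snd, e.adj⟩

namespace GraphWalk

variable {V : Type*} (G : SimpleGraph V)

theorem shift_eq_self {ψ : G.Dart → ℂ} (h : ∀ e : G.Dart, ψ e = ψ e.symm) :
    shift G ψ = ψ :=
  funext fun e => (h e).symm

variable [Fintype V] [DecidableEq V] [DecidableRel G.Adj]

theorem coin_apply_of_sum_eq_zero (ψ : G.Dart → ℂ) (e : G.Dart)
    (h : ∑ e' ∈ Finset.univ.filter (fun e' : G.Dart => e'.fst = e.fst), ψ e' = 0) :
    coin G ψ e = -ψ e := by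
  simp only [coin, h, mul_zero, zero_sub]

theorem coin_apply_of_forall_fst_eq (ψ : G.Dart → ℂ) (e : G.Dart) (c : ℂ)
    (h : ∀ e' : G.Dart, e'.fst = e.fst → ψ e' = c) :
    coin G ψ e = c := by
  have hsum : ∑ e' ∈ Finset.univ.filter (fun e' : G.Dart => e'.fst = e.fst), ψ e'
      = G.degree e.fst * c := by
    rw [Finset.sum_congr rfl fun e' he' => h e' (Finset.mem_filter.1 he').2,
      Finset.sum_const, G.dart_fst_fiber_card_eq_degree, nsmul_eq_mul]
  have hdeg : (G.degree e.fst : ℂ) ≠ 0 := Nat.cast_ne_zero.2 e.degree_fst_pos.ne'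
  rw [coin, hsum, h e rfl]
  field_simp
  ring

theorem coin_query_eq_self (M : Finset V) (ψ : G.Dart → ℂ) (a : ℂ)
    (h1 : ∀ e : G.Dart, e.fst ∉ M → ψ e = a)
    (h2 : ∀ v ∈ M, ∑ e ∈ Finset.univ.filter (fun e : G.Dart => e.fst = v), ψ e = 0) :
    coin G (query G M ψ) = ψ := by
  funext e
  by_cases hm : e.fst ∈ M
  · have hsum : ∑ e' ∈ Finset.univ.filter (fun e' : G.Dart => e'.fst = e.fst),
        query G M ψ e' = 0 := by
      rw [Finset.sum_congr rfl fun e' he' => by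
          rw [query, if_pos ((Finset.mem_filter.1 he').2 ▸ hm)],
        Finset.sum_neg_distrib, h2 _ hm, neg_zero]
    rw [coin_apply_of_sum_eq_zero G _ e hsum, query, if_pos hm, neg_neg]
  · have hconst : ∀ e' : G.Dart, e'.fst = e.fst → query G M ψ e' = a := fun e' he' => by
      rw [query, if_neg (he' ▸ hm), h1 e' (he' ▸ hm)]
    rw [coin_apply_of_forall_fst_eq G _ e a hconst, h1 e hm]

end GraphWalk

theorem general_stationarity_conditions_general {V : Type*} [Fintype V] [DecidableEq V]
    (G : SimpleGraph V) [DecidableRel G.Adj]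
    (M : Finset V) (ψ : G.Dart → ℂ) (a : ℂ)
    (h1 : ∀ e : G.Dart, e.fst ∉ M → ψ e = a)
    (h2 : ∀ v ∈ M, ∑ e ∈ Finset.univ.filter (fun e : G.Dart => e.fst = v), ψ e = 0)
    (h3 : ∀ e : G.Dart, ψ e = ψ e.symm) :
    GraphWalk.step G M ψ = ψ := by
  rw [GraphWalk.step, GraphWalk.coin_query_eq_self G M ψ a h1 h2, GraphWalk.shift_eq_self G h3]

/-- General conditions for stationarity: if all amplitudes at darts with unmarked
source equal a constant `a`, the amplitudes at each marked vertex sum to `0`, and the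
state is symmetric along every edge, then the state is fixed by one step of the search
algorithm `S ∘ C ∘ Q`. -/
theorem general_stationarity_conditions {V : Type*} [Fintype V] [DecidableEq V]
    (G : SimpleGraph V) [DecidableRel G.Adj] (hdeg : ∀ v : V, 0 < G.degree v)
    (M : Finset V) (ψ : G.Dart → ℂ) (a : ℂ)
    (h1 : ∀ e : G.Dart, e.fst ∉ M → ψ e = a)
    (h2 : ∀ v ∈ M, ∑ e ∈ Finset.univ.filter (fun e : G.Dart => e.fst = v), ψ e = 0)
    (h3 : ∀ e : G.Dart, ψ e = ψ e.symm) :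
    GraphWalk.step G M ψ = ψ :=
  general_stationarity_conditions_general G M ψ a h1 h2 h3
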